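/- Let F be an algebra of partial functions. If F admits a complete representation by partial functions, then F is atomic, i.e., every nonempty f ∈ F contains an atom of F. -/

import Mathlib

/-! Algebras of partial functions: basic definitions. -/

namespace PFAlg

variable {X Y : Type*}

/-- `f ⊆ X × X` is a partial function. -/
def IsPF (f : Set (X × X)) : Prop :=
  ∀ ⦃x y z : X⦄, (x, y) ∈ f → (x, z) ∈ f → y = z

/-- Composition of partial functions (binary relations), written left-to-right:
`f ∘ g = {(x,z) : ∃ y, (x,y) ∈ f and (y,z) ∈ g}`. -/
def comp (f g : Set (X × X)) : Set (X × X) :=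
  {p | ∃ y, (p.1, y) ∈ f ∧ (y, p.2) ∈ g}

/-- Antidomain: the diagonal of the set of points where `f` is undefined. -/
def adom (f : Set (X × X)) : Set (X × X) :=
  {p | p.1 = p.2 ∧ ∀ y, (p.1, y) ∉ f}

/-- An algebra of partial functions on the base `X`: a nonempty collection of
partial functions closed under composition, intersection and antidomain. -/
structure IsPFAlgebra (F : Set (Set (X × X))) : Prop where
  nonempty : F.Nonempty
  pf : ∀ f ∈ F, IsPF f
  comp_mem : ∀ f ∈ F, ∀ g ∈ F, comp f g ∈ F
  inter_mem : ∀ f ∈ F, ∀ g ∈ F, f ∩ g ∈ F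
  adom_mem : ∀ f ∈ F, adom f ∈ F

/-- `m` is the supremum of `S` in the poset `(F, ⊆)`. -/
def IsLUBIn (F S : Set (Set (X × X))) (m : Set (X × X)) : Prop :=
  m ∈ F ∧ (∀ s ∈ S, s ⊆ m) ∧ ∀ c ∈ F, (∀ s ∈ S, s ⊆ c) → m ⊆ c

/-- `m` is the infimum of `S` in the poset `(F, ⊆)`. -/
def IsGLBIn (F S : Set (Set (X × X))) (m : Set (X × X)) : Prop :=
  m ∈ F ∧ (∀ s ∈ S, m ⊆ s) ∧ ∀ c ∈ F, (∀ s ∈ S, c ⊆ s) → c ⊆ m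

/-- `b` is an atom of `F`: a minimal element of `F \ {∅}`. -/
def IsAtomOf (F : Set (Set (X × X))) (b : Set (X × X)) : Prop :=
  b ∈ F ∧ b ≠ ∅ ∧ ∀ g ∈ F, g ≠ ∅ → g ⊆ b → g = b

/-- `F` is atomic: every nonempty member contains an atom. -/
def Atomic (F : Set (Set (X × X))) : Prop :=
  ∀ f ∈ F, f ≠ ∅ → ∃ b, IsAtomOf F b ∧ b ⊆ f

/-- A representation of `F` by partial functions over the base `Y`. -/
structure IsRep (F : Set (Set (X × X))) (θ : Set (X × X) → Set (Y × Y)) : Prop where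
  injOn : Set.InjOn θ F
  pf : ∀ f ∈ F, IsPF (θ f)
  comp_eq : ∀ f ∈ F, ∀ g ∈ F, θ (comp f g) = comp (θ f) (θ g)
  inter_eq : ∀ f ∈ F, ∀ g ∈ F, θ (f ∩ g) = θ f ∩ θ g
  adom_eq : ∀ f ∈ F, θ (adom f) = adom (θ f)

/-- `θ` is meet complete: it turns existing infima of nonempty subsets into intersections. -/
def MeetComplete (F : Set (Set (X × X))) (θ : Set (X × X) → Set (Y × Y)) : Prop :=
  ∀ S ⊆ F, S.Nonempty → ∀ m, IsGLBIn F S m → θ m = ⋂ s ∈ S, θ s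

/-- `θ` is join complete: it turns existing suprema into unions. -/
def JoinComplete (F : Set (Set (X × X))) (θ : Set (X × X) → Set (Y × Y)) : Prop :=
  ∀ S ⊆ F, ∀ m, IsLUBIn F S m → θ m = ⋃ s ∈ S, θ s

/-- `θ` is an atomic representation. -/
def AtomicRep (F : Set (Set (X × X))) (θ : Set (X × X) → Set (Y × Y)) : Prop :=
  ∀ f ∈ F, ∀ p ∈ θ f, ∃ b, IsAtomOf F b ∧ p ∈ θ b

/-- Composition in `F` is completely left-distributive over joins. -/
def CompLeftDistribJoins (F : Set (Set (X × X))) : Prop :=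
  ∀ a ∈ F, ∀ S ⊆ F, ∀ m, IsLUBIn F S m → IsLUBIn F ((fun s => comp a s) '' S) (comp a m)

/-- Composition in `F` is completely left-distributive over meets. -/
def CompLeftDistribMeets (F : Set (Set (X × X))) : Prop :=
  ∀ a ∈ F, ∀ S ⊆ F, S.Nonempty → ∀ m, IsGLBIn F S m →
    IsGLBIn F ((fun s => comp a s) '' S) (comp a m)

end PFAlg

/-!
Fix a point `p` in the image `θ f` of a nonempty `f`, and consider the elements `g` of `F` with
`p ∈ θ g`. Their meet cannot be `∅`, since meet completeness would put `p` into `θ ∅ = ∅`; so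
they have a nonempty lower bound `c ⊆ f`. If `g ⊆ c` is nonempty and `p ∉ θ g`, then `p` still
lies in the image of the restriction `A(g) ∘ c` of `c` to the antidomain of `g`, so
`g ⊆ c ⊆ A(g) ∘ c`, which is absurd as `g` and `A(g) ∘ c` have disjoint domains. Hence every
nonempty `g ⊆ c` lies above `c`, i.e. `c` is an atom below `f`.
-/

namespace PFAlg

variable {X Y : Type*}

theorem inter_adom_self (f : Set (X × X)) : f ∩ adom f = ∅ :=
  Set.eq_empty_of_forall_notMem fun _ ⟨hp, _, hundef⟩ => hundef _ hp

theorem not_subset_comp_adom_self {g : Set (X × X)} (hg : g ≠ ∅) (m : Set (X × X)) :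
    ¬ g ⊆ comp (adom g) m := by
  intro hsub
  obtain ⟨⟨x, y⟩, hxy⟩ := Set.nonempty_iff_ne_empty.mpr hg
  obtain ⟨_, ⟨_, hundef⟩, _⟩ := hsub hxy
  exact hundef y hxy

theorem IsPFAlgebra.empty_mem {F : Set (Set (X × X))} (hF : IsPFAlgebra F) : ∅ ∈ F := by
  obtain ⟨f, hf⟩ := hF.nonempty
  simpa only [inter_adom_self] using hF.inter_mem f hf _ (hF.adom_mem f hf)

def pointFilter (F : Set (Set (X × X))) (θ : Set (X × X) → Set (Y × Y)) (p : Y × Y) :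
    Set (Set (X × X)) :=
  {g | g ∈ F ∧ p ∈ θ g}

namespace IsRep

variable {F : Set (Set (X × X))} {θ : Set (X × X) → Set (Y × Y)}

theorem map_empty (hF : IsPFAlgebra F) (hθ : IsRep F θ) : θ ∅ = ∅ := by
  obtain ⟨f, hf⟩ := hF.nonempty
  rw [← inter_adom_self f, hθ.inter_eq f hf _ (hF.adom_mem f hf), hθ.adom_eq f hf,
    inter_adom_self]

theorem map_ne_empty (hF : IsPFAlgebra F) (hθ : IsRep F θ) {f : Set (X × X)} (hf : f ∈ F)
    (hne : f ≠ ∅) : θ f ≠ ∅ := fun h =>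
  hne (hθ.injOn hf hF.empty_mem (h.trans (hθ.map_empty hF).symm))

theorem map_mono (hθ : IsRep F θ) {g m : Set (X × X)} (hg : g ∈ F) (hm : m ∈ F) (h : g ⊆ m) :
    θ g ⊆ θ m := by
  rw [← Set.inter_eq_left.mpr h, hθ.inter_eq g hg m hm]
  exact Set.inter_subset_right

theorem mem_map_comp_adom (hF : IsPFAlgebra F) (hθ : IsRep F θ) {g m : Set (X × X)}
    (hg : g ∈ F) (hm : m ∈ F) (hgm : g ⊆ m) {p : Y × Y} (hpm : p ∈ θ m) (hpg : p ∉ θ g) :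
    p ∈ θ (comp (adom g) m) := by
  rw [hθ.comp_eq _ (hF.adom_mem g hg) m hm, hθ.adom_eq g hg]
  refine ⟨p.1, ⟨rfl, fun z hz => ?_⟩, hpm⟩
  obtain rfl : z = p.2 := hθ.pf m hm (hθ.map_mono hg hm hgm hz) hpm
  exact hpg hz

theorem mem_map_of_subset_lowerBound (hF : IsPFAlgebra F) (hθ : IsRep F θ) {p : Y × Y}
    {c g m : Set (X × X)} (hc : c ∈ lowerBounds (pointFilter F θ p)) (hg : g ∈ F)
    (hgne : g ≠ ∅) (hgc : g ⊆ c) (hm : m ∈ F) (hgm : g ⊆ m) (hpm : p ∈ θ m) : p ∈ θ g := by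
  by_contra hpg
  have hmem : comp (adom g) m ∈ pointFilter F θ p :=
    ⟨hF.comp_mem _ (hF.adom_mem g hg) m hm, hθ.mem_map_comp_adom hF hg hm hgm hpm hpg⟩
  exact not_subset_comp_adom_self hgne m (hgc.trans (hc hmem))

theorem isAtomOf_of_mem_lowerBounds (hF : IsPFAlgebra F) (hθ : IsRep F θ) {p : Y × Y}
    {c : Set (X × X)} (hcF : c ∈ F) (hcne : c ≠ ∅) (hc : c ∈ lowerBounds (pointFilter F θ p))
    (hpc : p ∈ θ c) : IsAtomOf F c :=
  ⟨hcF, hcne, fun _ hg hgne hgc => hgc.antisymm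
    (hc ⟨hg, hθ.mem_map_of_subset_lowerBound hF hc hg hgne hgc hcF hgc hpc⟩)⟩

end IsRep

theorem MeetComplete.exists_ne_empty_mem_lowerBounds {F : Set (Set (X × X))}
    {θ : Set (X × X) → Set (Y × Y)} (hmeet : MeetComplete F θ) (hF : IsPFAlgebra F)
    (hθ : IsRep F θ) {f : Set (X × X)} {p : Y × Y} (hf : f ∈ pointFilter F θ p) :
    ∃ c ∈ F, c ≠ ∅ ∧ c ∈ lowerBounds (pointFilter F θ p) := by
  by_contra hnone
  have hglb : IsGLBIn F (pointFilter F θ p) ∅ :=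
    ⟨hF.empty_mem, fun s _ => Set.empty_subset s, fun c hcF hc =>
      (not_not.mp fun hcne => hnone ⟨c, hcF, hcne, hc⟩).le⟩
  have hp : p ∈ θ ∅ := by
    rw [hmeet _ (fun _ hg => hg.1) ⟨f, hf⟩ ∅ hglb, Set.mem_iInter₂]
    exact fun _ hs => hs.2
  rwa [hθ.map_empty hF] at hp

end PFAlg

open PFAlg in
theorem stmt5_general {X Y : Type*} (F : Set (Set (X × X))) (hF : IsPFAlgebra F)
    (θ : Set (X × X) → Set (Y × Y)) (hθ : IsRep F θ)
    (hmeet : MeetComplete F θ) :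
    Atomic F := by
  intro f hf hfne
  obtain ⟨p, hp⟩ := Set.nonempty_iff_ne_empty.mpr (hθ.map_ne_empty hF hf hfne)
  obtain ⟨c, hcF, hcne, hc⟩ := hmeet.exists_ne_empty_mem_lowerBounds hF hθ ⟨hf, hp⟩
  have hcf : c ⊆ f := hc ⟨hf, hp⟩
  have hpc : p ∈ θ c := hθ.mem_map_of_subset_lowerBound hF hc hcF hcne subset_rfl hf hcf hp
  exact ⟨c, hθ.isAtomOf_of_mem_lowerBounds hF hcF hcne hc hpc, hcf⟩

open PFAlg in
/-- if an algebra of partial functions admits a complete representation by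
partial functions, then it is atomic. -/
theorem stmt5 {X Y : Type*} (F : Set (Set (X × X))) (hF : IsPFAlgebra F)
    (θ : Set (X × X) → Set (Y × Y)) (hθ : IsRep F θ)
    (hmeet : MeetComplete F θ) (hjoin : JoinComplete F θ) :
    Atomic F :=
  stmt5_general F hF θ hθ hmeet
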